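/- arXiv:1010.2947 — 2 statements merged into one kernel-verified Lean document; each statement's English description precedes it below -/
import Mathlib

section
/- Let λ, μ be real constants with μ > 0 and λ + 2μ > 0, let k, l ∈ ℝ with k² + l² > 0, let t ≥ 0, and let g, h : [0,t] → ℂ be continuous. For m ∈ ℂ and j = 1, 2 define U^{(j)}(m) = −i ∫₀ᵗ (t−s)·φ( c_j²(k²+l²+m²)(t−s)² )·g(s) ds and V^{(j)}(m) = −i ∫₀ᵗ (t−s)·φ( c_j²(k²+l²+m²)(t−s)² )·h(s) ds, where c₁² = λ+2μ and c₂² = μ. Then there exists an entire function H : ℂ → ℂ such that for every m ∈ ℂ with k² + l² + m² ≠ 0, H(m) = ( 4μk m²·U^{(1)}(m) + 4μl m²·V^{(1)}(m) + 2μk(k²+l²−m²)·U^{(2)}(m) + 2μl(k²+l²−m²)·V^{(2)}(m) ) / ( k² + l² + m² ). In other words, the function H₃ of the paper extends analytically across the points m = ± i√(k²+l²). -/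
open MeasureTheory intervalIntegral Set

noncomputable section

/-- The entire function `φ(ζ) = ∑ (−1)ⁿ ζⁿ / (2n+1)!`, so that `φ(z²) = sin z / z` for `z ≠ 0`. -/
def phi (ζ : ℂ) : ℂ := ∑' n : ℕ, (-1) ^ n * ζ ^ n / ((2 * n + 1).factorial : ℂ)

/-- The sine-kernel transform `U⁽ʲ⁾` (resp. `V⁽ʲ⁾`) of a boundary value `g`,
with wave speed squared `c²` and Fourier variables `k, l, m`. -/
def sineTransform (c2 : ℂ) (k l : ℝ) (t : ℝ) (g : ℝ → ℂ) (m : ℂ) : ℂ :=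
  -Complex.I * ∫ s in (0 : ℝ)..t, ((t - s : ℝ) : ℂ) *
    phi (c2 * ((k : ℂ) ^ 2 + (l : ℂ) ^ 2 + m ^ 2) * ((t - s : ℝ) : ℂ) ^ 2) * g s

/-! Since `φ(ζ) = 1 + ζ ψ(ζ)` with `ψ = dslope φ 0` entire, every transform splits as
`U⁽ʲ⁾(m) = A + (k² + l² + m²) Rⱼ(m)`, where `A = -i ∫₀ᵗ (t - s) g(s) ds` depends neither on `j`
nor on `m`, and `Rⱼ` is entire by holomorphy under the integral sign. In the numerator the
`A`-terms carry the weight `4μm² + 2μ(k² + l² - m²) = 2μ(k² + l² + m²)`, so the numerator is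
`k² + l² + m²` times an entire function. -/

open Complex Metric Function

lemma differentiable_tsum_mul_pow_of_norm_le_inv_factorial {a : ℕ → ℂ}
    (ha : ∀ n, ‖a n‖ ≤ (n.factorial : ℝ)⁻¹) :
    Differentiable ℂ fun z : ℂ => ∑' n, a n * z ^ n := by
  intro z
  have hU : IsOpen (ball (0 : ℂ) (‖z‖ + 1)) := isOpen_ball
  refine ((differentiableOn_tsum_of_summable_norm (Real.summable_pow_div_factorial (‖z‖ + 1))
    (fun n => (differentiable_const _ |>.mul (differentiable_pow n)).differentiableOn) hU
    fun n w hw => ?_).differentiableAt (hU.mem_nhds (by simp)))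
  rw [mem_ball_zero_iff] at hw
  calc ‖a n * w ^ n‖ = ‖a n‖ * ‖w‖ ^ n := by rw [norm_mul, norm_pow]
    _ ≤ (n.factorial : ℝ)⁻¹ * (‖z‖ + 1) ^ n := by gcongr; exact ha n
    _ = (‖z‖ + 1) ^ n / n.factorial := by ring

lemma differentiable_phi : Differentiable ℂ phi := by
  have hphi : phi = fun ζ => ∑' n, (-1) ^ n / ((2 * n + 1).factorial : ℂ) * ζ ^ n := by
    ext ζ
    simp only [phi, div_mul_eq_mul_div]
  rw [hphi]
  refine differentiable_tsum_mul_pow_of_norm_le_inv_factorial fun n => ?_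
  rw [norm_div, norm_pow, norm_neg, norm_one, one_pow, Complex.norm_natCast, one_div]
  exact inv_anti₀ (by positivity) (Nat.cast_le.2 (Nat.factorial_le (by omega)))

lemma phi_zero : phi 0 = 1 := by
  rw [phi, tsum_eq_single 0 fun n hn => by simp [hn]]
  simp

lemma phi_eq_one_add_mul_dslope (ζ : ℂ) : phi ζ = 1 + ζ * dslope phi 0 ζ := by
  have h := sub_smul_dslope phi 0 ζ
  rw [sub_zero, smul_eq_mul, phi_zero] at h
  rw [h]
  ring

lemma differentiable_dslope_phi : Differentiable ℂ (dslope phi 0) := by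
  rw [← differentiableOn_univ, differentiableOn_dslope Filter.univ_mem, differentiableOn_univ]
  exact differentiable_phi

lemma differentiable_intervalIntegral_smul {E : Type*} [NormedAddCommGroup E] [NormedSpace ℂ E]
    [CompleteSpace E] {F : ℂ → ℝ → E} (hF : Continuous (uncurry F))
    (hFd : ∀ s, Differentiable ℂ (F · s)) {f : ℝ → ℂ} {a b : ℝ} (hf : ContinuousOn f (uIcc a b)) :
    Differentiable ℂ fun z => ∫ s in a..b, f s • F z s := by
  intro z₀
  obtain ⟨C, hC⟩ := ((isCompact_closedBall z₀ 2).prod isCompact_uIcc).exists_bound_of_continuousOn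
    hF.continuousOn
  obtain ⟨D, hD⟩ := isCompact_uIcc.exists_bound_of_continuousOn hf
  -- Cauchy's estimate dominates `∂F/∂z` by the sup of `F` on a larger compact set.
  have deriv_le {z : ℂ} (hz : z ∈ ball z₀ 1) {s : ℝ} (hs : s ∈ uIcc a b) :
      ‖deriv (F · s) z‖ ≤ C := by
    refine div_one C ▸ norm_deriv_le_of_forall_mem_sphere_norm_le one_pos
      (hFd s).diffContOnCl fun w hw => hC (w, s) ⟨?_, hs⟩
    simp only [mem_sphere, mem_ball, mem_closedBall] at hw hz ⊢
    linarith [dist_triangle w z z₀]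
  have deriv_meas : StronglyMeasurable fun s => deriv (F · s) z₀ :=
    .comp_measurable (stronglyMeasurable_deriv_with_param (f := fun s z => F z s)
      (hF.comp continuous_swap)) (measurable_id.prodMk measurable_const)
  refine (intervalIntegral.hasDerivAt_integral_of_dominated_loc_of_deriv_le
    (F' := fun z s => f s • deriv (F · s) z) (bound := fun _ => D * C) (ball_mem_nhds z₀ one_pos)
    (.of_forall fun z => ((hf.smul (hF.comp (.prodMk_right z)).continuousOn).mono
      uIoc_subset_uIcc).aestronglyMeasurable measurableSet_uIoc)
    (hf.smul (hF.comp (.prodMk_right z₀)).continuousOn).intervalIntegrable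
    (((hf.mono uIoc_subset_uIcc).aestronglyMeasurable measurableSet_uIoc).smul
      deriv_meas.aestronglyMeasurable) (.of_forall fun s hs z hz => ?_)
    intervalIntegrable_const
    (.of_forall fun s _ z _ => ((hFd s z).hasDerivAt).const_smul (f s))).2.differentiableAt
  have hs' := uIoc_subset_uIcc hs
  rw [norm_smul]
  exact mul_le_mul (hD s hs') (deriv_le hz hs') (norm_nonneg _)
    ((norm_nonneg _).trans (hD s hs'))

def sineTransformRemainder (c2 : ℂ) (k l t : ℝ) (g : ℝ → ℂ) (m : ℂ) : ℂ :=
  -I * ∫ s in (0 : ℝ)..t, g s * (((t - s : ℝ) : ℂ) ^ 3 * c2 *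
    dslope phi 0 (c2 * ((k : ℂ) ^ 2 + (l : ℂ) ^ 2 + m ^ 2) * ((t - s : ℝ) : ℂ) ^ 2))

section

variable (c2 : ℂ) (k l t : ℝ) {g : ℝ → ℂ} (hg : ContinuousOn g (uIcc 0 t))
include hg

lemma sineTransform_eq_add_mul_remainder (m : ℂ) :
    sineTransform c2 k l t g m = -I * (∫ s in (0 : ℝ)..t, ((t - s : ℝ) : ℂ) * g s) +
      ((k : ℂ) ^ 2 + (l : ℂ) ^ 2 + m ^ 2) * sineTransformRemainder c2 k l t g m := by
  rw [sineTransform, sineTransformRemainder]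
  set D : ℂ := (k : ℂ) ^ 2 + (l : ℂ) ^ 2 + m ^ 2
  have hw : Continuous fun s : ℝ => ((t - s : ℝ) : ℂ) := by fun_prop
  have hR : Continuous fun s : ℝ =>
      ((t - s : ℝ) : ℂ) ^ 3 * c2 * dslope phi 0 (c2 * D * ((t - s : ℝ) : ℂ) ^ 2) := by
    have := differentiable_dslope_phi.continuous
    fun_prop
  have integrand_eq (s : ℝ) :
      ((t - s : ℝ) : ℂ) * phi (c2 * D * ((t - s : ℝ) : ℂ) ^ 2) * g s =
        ((t - s : ℝ) : ℂ) * g s + D * (g s * (((t - s : ℝ) : ℂ) ^ 3 * c2 *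
          dslope phi 0 (c2 * D * ((t - s : ℝ) : ℂ) ^ 2))) := by
    rw [phi_eq_one_add_mul_dslope]
    ring
  simp only [integrand_eq]
  rw [intervalIntegral.integral_add, intervalIntegral.integral_const_mul]
  · ring
  · exact (hw.continuousOn.mul hg).intervalIntegrable
  · exact (hg.mul hR.continuousOn).intervalIntegrable.const_mul D

lemma differentiable_sineTransformRemainder :
    Differentiable ℂ (sineTransformRemainder c2 k l t g) := by
  have hψ := differentiable_dslope_phi
  have hψc := hψ.continuous
  exact (differentiable_intervalIntegral_smul (by fun_prop) (fun s => by fun_prop) hg).const_mul _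

end

theorem H3_extends_entire_general (lam mu : ℝ)
    (k l : ℝ) (t : ℝ) (ht : 0 ≤ t)
    (g h : ℝ → ℂ) (hg : ContinuousOn g (Icc (0 : ℝ) t))
    (hh : ContinuousOn h (Icc (0 : ℝ) t)) :
    ∃ H : ℂ → ℂ, Differentiable ℂ H ∧
      ∀ m : ℂ, (k : ℂ) ^ 2 + (l : ℂ) ^ 2 + m ^ 2 ≠ 0 →
        H m = (4 * (mu : ℂ) * (k : ℂ) * m ^ 2 *
                  sineTransform ((lam : ℂ) + 2 * (mu : ℂ)) k l t g m
              + 4 * (mu : ℂ) * (l : ℂ) * m ^ 2 *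
                  sineTransform ((lam : ℂ) + 2 * (mu : ℂ)) k l t h m
              + 2 * (mu : ℂ) * (k : ℂ) * ((k : ℂ) ^ 2 + (l : ℂ) ^ 2 - m ^ 2) *
                  sineTransform (mu : ℂ) k l t g m
              + 2 * (mu : ℂ) * (l : ℂ) * ((k : ℂ) ^ 2 + (l : ℂ) ^ 2 - m ^ 2) *
                  sineTransform (mu : ℂ) k l t h m) /
            ((k : ℂ) ^ 2 + (l : ℂ) ^ 2 + m ^ 2) := by
  rw [← uIcc_of_le ht] at hg hh
  set c₁ : ℂ := (lam : ℂ) + 2 * (mu : ℂ)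
  refine ⟨fun m => 2 * mu * (k * (-I * ∫ s in (0 : ℝ)..t, ((t - s : ℝ) : ℂ) * g s) +
      l * (-I * ∫ s in (0 : ℝ)..t, ((t - s : ℝ) : ℂ) * h s)) +
      4 * mu * m ^ 2 *
        (k * sineTransformRemainder c₁ k l t g m + l * sineTransformRemainder c₁ k l t h m) +
      2 * mu * (k ^ 2 + l ^ 2 - m ^ 2) *
        (k * sineTransformRemainder mu k l t g m + l * sineTransformRemainder mu k l t h m), ?_,
    fun m hm => ?_⟩
  · have := differentiable_sineTransformRemainder c₁ k l t hg
    have := differentiable_sineTransformRemainder c₁ k l t hh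
    have := differentiable_sineTransformRemainder mu k l t hg
    have := differentiable_sineTransformRemainder mu k l t hh
    fun_prop
  · simp only [sineTransform_eq_add_mul_remainder _ k l t hg,
      sineTransform_eq_add_mul_remainder _ k l t hh]
    rw [eq_div_iff hm]
    ring

/-- The function `H₃` of the paper extends analytically across the points `m = ± i√(k²+l²)`:
there is an entire function `H` agreeing with
`(4μk m² U⁽¹⁾ + 4μl m² V⁽¹⁾ + 2μk(k²+l²−m²)U⁽²⁾ + 2μl(k²+l²−m²)V⁽²⁾)/(k²+l²+m²)`
wherever `k²+l²+m² ≠ 0`. -/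
theorem H3_extends_entire (lam mu : ℝ) (hmu : 0 < mu) (hl : 0 < lam + 2 * mu)
    (k l : ℝ) (hkl : 0 < k ^ 2 + l ^ 2) (t : ℝ) (ht : 0 ≤ t)
    (g h : ℝ → ℂ) (hg : ContinuousOn g (Icc (0 : ℝ) t))
    (hh : ContinuousOn h (Icc (0 : ℝ) t)) :
    ∃ H : ℂ → ℂ, Differentiable ℂ H ∧
      ∀ m : ℂ, (k : ℂ) ^ 2 + (l : ℂ) ^ 2 + m ^ 2 ≠ 0 →
        H m = (4 * (mu : ℂ) * (k : ℂ) * m ^ 2 *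
                  sineTransform ((lam : ℂ) + 2 * (mu : ℂ)) k l t g m
              + 4 * (mu : ℂ) * (l : ℂ) * m ^ 2 *
                  sineTransform ((lam : ℂ) + 2 * (mu : ℂ)) k l t h m
              + 2 * (mu : ℂ) * (k : ℂ) * ((k : ℂ) ^ 2 + (l : ℂ) ^ 2 - m ^ 2) *
                  sineTransform (mu : ℂ) k l t g m
              + 2 * (mu : ℂ) * (l : ℂ) * ((k : ℂ) ^ 2 + (l : ℂ) ^ 2 - m ^ 2) *
                  sineTransform (mu : ℂ) k l t h m) /
            ((k : ℂ) ^ 2 + (l : ℂ) ^ 2 + m ^ 2) :=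
  H3_extends_entire_general lam mu k l t ht g h hg hh
end
end

section
/- Let λ, μ ∈ ℝ with μ ≠ 0 and λ + 2μ ≠ 0, let k, l ∈ ℝ, and let m, m₂₁ ∈ ℂ satisfy μ·m₂₁² = (λ+2μ)·m² + (λ+μ)·(k²+l²). Let D be the 3×3 complex matrix with rows ( −2μkm , −2μml , λ(k²+l²) + m²(λ+2μ) ), ( −μkl , μ(m₂₁²−l²) , −2μl m₂₁ ), ( μ(k²−m₂₁²) , μkl , 2μk m₂₁ ). Then det D = μ m₂₁² ( ( λ(k²+l²) + m²(λ+2μ) )² − 4μ²(k²+l²)·m·m₂₁ ). -/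
theorem det_elastodynamic_matrix {R : Type*} [CommRing R] (lam mu k l m m21 : R)
    (hrel : mu * m21 ^ 2 = (lam + 2 * mu) * m ^ 2 + (lam + mu) * (k ^ 2 + l ^ 2)) :
    Matrix.det
      !![-(2 * mu * k * m), -(2 * mu * m * l), lam * (k ^ 2 + l ^ 2) + m ^ 2 * (lam + 2 * mu);
        -(mu * k * l), mu * (m21 ^ 2 - l ^ 2), -(2 * mu * l * m21);
        mu * (k ^ 2 - m21 ^ 2), mu * k * l, 2 * mu * k * m21]
      = mu * m21 ^ 2 *
          ((lam * (k ^ 2 + l ^ 2) + m ^ 2 * (lam + 2 * mu)) ^ 2 -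
            4 * mu ^ 2 * (k ^ 2 + l ^ 2) * m * m21) := by
  rw [Matrix.det_fin_three]
  simp only [Matrix.of_apply, Matrix.cons_val_zero, Matrix.cons_val_one, Matrix.cons_val_two,
    Matrix.head_cons, Matrix.tail_cons]
  -- Cofactor expansion yields the claimed value plus `μ m₂₁² E` times the defect of the
  -- relation, where `E = λ(k²+l²) + m²(λ+2μ)` is the top-right entry.
  linear_combination mu * m21 ^ 2 * (lam * (k ^ 2 + l ^ 2) + m ^ 2 * (lam + 2 * mu)) * hrel

theorem det_D_general (lam mu : ℝ) (k l : ℝ)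
    (m m21 : ℂ)
    (hrel : (mu : ℂ) * m21 ^ 2 =
      ((lam : ℂ) + 2 * (mu : ℂ)) * m ^ 2 + ((lam : ℂ) + (mu : ℂ)) * ((k : ℂ) ^ 2 + (l : ℂ) ^ 2)) :
    Matrix.det
      !![-(2 * (mu : ℂ) * (k : ℂ) * m),
          -(2 * (mu : ℂ) * m * (l : ℂ)),
          (lam : ℂ) * ((k : ℂ) ^ 2 + (l : ℂ) ^ 2) + m ^ 2 * ((lam : ℂ) + 2 * (mu : ℂ));
        -((mu : ℂ) * (k : ℂ) * (l : ℂ)),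
          (mu : ℂ) * (m21 ^ 2 - (l : ℂ) ^ 2),
          -(2 * (mu : ℂ) * (l : ℂ) * m21);
        (mu : ℂ) * ((k : ℂ) ^ 2 - m21 ^ 2),
          (mu : ℂ) * (k : ℂ) * (l : ℂ),
          2 * (mu : ℂ) * (k : ℂ) * m21]
      = (mu : ℂ) * m21 ^ 2 *
          (((lam : ℂ) * ((k : ℂ) ^ 2 + (l : ℂ) ^ 2) + m ^ 2 * ((lam : ℂ) + 2 * (mu : ℂ))) ^ 2 -
            4 * (mu : ℂ) ^ 2 * ((k : ℂ) ^ 2 + (l : ℂ) ^ 2) * m * m21) :=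
  det_elastodynamic_matrix _ _ _ _ _ _ hrel

/-- The determinant `Δ₂ = det D` of the coefficient matrix of the linear system for
`U⁽¹⁾, V⁽¹⁾, W⁽¹⁾`: `Δ₂ = μ m₂₁² ((λ(k²+l²)+m²(λ+2μ))² − 4μ²(k²+l²) m m₂₁)`. -/
theorem det_D (lam mu : ℝ) (hmu : mu ≠ 0) (hl : lam + 2 * mu ≠ 0) (k l : ℝ)
    (m m21 : ℂ)
    (hrel : (mu : ℂ) * m21 ^ 2 =
      ((lam : ℂ) + 2 * (mu : ℂ)) * m ^ 2 + ((lam : ℂ) + (mu : ℂ)) * ((k : ℂ) ^ 2 + (l : ℂ) ^ 2)) :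
    Matrix.det
      !![-(2 * (mu : ℂ) * (k : ℂ) * m),
          -(2 * (mu : ℂ) * m * (l : ℂ)),
          (lam : ℂ) * ((k : ℂ) ^ 2 + (l : ℂ) ^ 2) + m ^ 2 * ((lam : ℂ) + 2 * (mu : ℂ));
        -((mu : ℂ) * (k : ℂ) * (l : ℂ)),
          (mu : ℂ) * (m21 ^ 2 - (l : ℂ) ^ 2),
          -(2 * (mu : ℂ) * (l : ℂ) * m21);
        (mu : ℂ) * ((k : ℂ) ^ 2 - m21 ^ 2),
          (mu : ℂ) * (k : ℂ) * (l : ℂ),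
          2 * (mu : ℂ) * (k : ℂ) * m21]
      = (mu : ℂ) * m21 ^ 2 *
          (((lam : ℂ) * ((k : ℂ) ^ 2 + (l : ℂ) ^ 2) + m ^ 2 * ((lam : ℂ) + 2 * (mu : ℂ))) ^ 2 -
            4 * (mu : ℂ) ^ 2 * ((k : ℂ) ^ 2 + (l : ℂ) ^ 2) * m * m21) :=
  det_D_general lam mu k l m m21 hrel
end
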